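/- Let g be a real semisimple Lie algebra, α a simple root, v ⊆ g_α a 2-dimensional abelian subspace, ξ ∈ v a unit vector, and t ∈ ℝ. Set g = Exp(tξ). Then Ad(g⁻¹)(a ⊕ (n ⊖ v)), intersected with a ⊕ n and described explicitly, equals ker α ⊕ (n ⊖ v) ⊕ ℝ(H_α + t|α|²ξ); in particular its orthogonal complement inside a ⊕ n with respect to ⟨·,·⟩_{AN} is spanned by η and tH_α - 2ξ, where {ξ,η} is an orthogonal basis of v. -/

import Mathlib

/-- The inner product `⟨X,Y⟩ = -B(X, θY)` associated with a Cartan involution `θ`. -/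
noncomputable def cip (L : Type*) [LieRing L] [LieAlgebra ℝ L]
    (θ : L →ₗ⁅ℝ⁆ L) (X Y : L) : ℝ :=
  -(killingForm ℝ L X (θ Y))

/-- The left-invariant metric of `AN`. -/
noncomputable def cipAN (L : Type*) [LieRing L] [LieAlgebra ℝ L]
    (θ : L →ₗ⁅ℝ⁆ L) (Pa Pn : L →ₗ[ℝ] L) (X Y : L) : ℝ :=
  cip L θ (Pa X) (Pa Y) + (1 / 2) * cip L θ (Pn X) (Pn Y)

/-- `E` is the exponential `e^f` of the endomorphism `f`. -/
def IsExpOf (L : Type*) [LieRing L] [LieAlgebra ℝ L] [TopologicalSpace L]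
    (f E : Module.End ℝ L) : Prop :=
  ∀ Y : L, Filter.Tendsto
    (fun N : ℕ => ∑ k ∈ Finset.range N, ((k.factorial : ℝ)⁻¹ • (f ^ k)) Y)
    Filter.atTop (nhds (E Y))

/-!
`Ad(g⁻¹) = e^{-t ad ξ}` is an operator exponential, hence invertible. It fixes `ker α ⊆ a`
pointwise, and it maps `n ⊖ v` into itself because `[ξ, n] ⊆ n` is orthogonal to `v` (`α` is
simple), hence onto itself by finite-dimensionality. As `ad ξ` maps `a` into `ℝ ξ` and kills `ξ`,
`e^{-t ad ξ} H_α = H_α + t α(H_α) ξ`, and `a = ker α ⊕ ℝ H_α`. For the second claim write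
`x = H + X ∈ a ⊕ n`: by uniqueness of this decomposition, `x` lies in the image iff
`⟨X, η⟩ = 0` and `⟨X, ξ⟩ = t α(H)`, which are the two `⟨·,·⟩_{AN}`-orthogonality conditions.
-/

namespace IsExpOf

variable {L : Type*} [LieRing L] [LieAlgebra ℝ L] [TopologicalSpace L] {f E : Module.End ℝ L}

theorem apply_eq_add_of_apply_apply_eq_zero [T2Space L] (h : IsExpOf L f E) {x : L}
    (hx : f (f x) = 0) : E x = x + f x := by
  refine tendsto_nhds_unique (h x) (tendsto_const_nhds.congr' ?_)
  filter_upwards [Filter.eventually_ge_atTop 2] with N hN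
  induction N, hN using Nat.le_induction with
  | base => simp [Finset.sum_range_succ]
  | succ N hN ih =>
    obtain ⟨k, rfl⟩ := Nat.exists_eq_add_of_le' hN
    rw [Finset.sum_range_succ, ← ih, LinearMap.smul_apply, pow_add, Module.End.mul_apply, sq,
      Module.End.mul_apply, hx, map_zero, smul_zero, add_zero]

variable [FiniteDimensional ℝ L] [IsTopologicalAddGroup L] [ContinuousSMul ℝ L] [T2Space L]

theorem le_comap_of_le_comap {p : Submodule ℝ L} (h : IsExpOf L f E) (hp : p ≤ p.comap f) :
    p ≤ p.comap E := fun x hx =>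
  p.closed_of_finiteDimensional.mem_of_tendsto (h x) <| .of_forall fun _ =>
    p.sum_mem fun k _ => p.smul_mem _ (p.le_comap_pow_of_le_comap hp k hx)

/-- Transported to the Banach algebra of operators on `ℝᵈ`, `E` is an operator exponential, hence
a unit. -/
theorem isUnit (h : IsExpOf L f E) : IsUnit E := by
  let F := Fin (Module.finrank ℝ L) → ℝ
  let e : L ≃L[ℝ] F := (Module.finBasis ℝ L).equivFun.toContinuousLinearEquiv
  let Φ : Module.End ℝ L ≃ₐ[ℝ] F →L[ℝ] F :=
    (e.toLinearEquiv.conjAlgEquiv ℝ).trans (Module.End.toContinuousLinearMap F)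
  let _ : NormedAlgebra ℚ (F →L[ℝ] F) := NormedAlgebra.restrictScalars ℚ ℝ (F →L[ℝ] F)
  have hΦ : ∀ (g : Module.End ℝ L) Y, e.symm (Φ g (e Y)) = g Y := fun g Y => by
    change e.symm (e (g (e.symm (e Y)))) = g Y
    simp
  suffices E = Φ.symm (NormedSpace.exp (Φ f)) from
    this ▸ (NormedSpace.isUnit_exp (Φ f)).map Φ.symm
  ext Y
  refine tendsto_nhds_unique (h Y) ?_
  have := ((NormedSpace.exp_series_hasSum_exp' (𝕂 := ℝ) (Φ f)).mapL
    ((e.symm : F →L[ℝ] L).comp (ContinuousLinearMap.apply ℝ F (e Y)))).tendsto_sum_nat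
  convert this using 2 with N
  · simp [← map_pow, hΦ]
  · rfl

theorem map_eq_of_le_comap {p : Submodule ℝ L} (h : IsExpOf L f E) (hp : p ≤ p.comap f) :
    p.map E = p :=
  Submodule.eq_of_le_of_finrank_eq (Submodule.map_le_iff_le_comap.mpr (h.le_comap_of_le_comap hp))
    (LinearEquiv.finrank_eq
      (Submodule.equivMapOfInjective E ((Module.End.isUnit_iff E).mp h.isUnit).injective p)).symm

end IsExpOf

theorem Submodule.inf_ker_sup_span_singleton_eq {K V : Type*} [Field K] [AddCommGroup V]
    [Module K V] {p : Submodule K V} {φ : V →ₗ[K] K} {x : V} (hx : x ∈ p)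
    (hφ : φ x = 0 → ∀ y ∈ p, φ y = 0) : p ⊓ LinearMap.ker φ ⊔ span K {x} = p := by
  refine le_antisymm (sup_le inf_le_left ((span_singleton_le_iff_mem _ _).mpr hx)) fun y hy => ?_
  by_cases hφx : φ x = 0
  · exact mem_sup_left ⟨hy, hφ hφx y hy⟩
  · have hdecomp : y = (y - (φ y / φ x) • x) + (φ y / φ x) • x := (sub_add_cancel _ _).symm
    rw [hdecomp]
    refine add_mem (mem_sup_left ⟨sub_mem hy (smul_mem _ _ hx), ?_⟩)
      (mem_sup_right (mem_span_singleton.mpr ⟨_, rfl⟩))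
    simp [hφx]

theorem Submodule.add_mem_sup_sup_span_singleton_iff {R M : Type*} [CommRing R] [AddCommGroup M]
    [Module R M] {a n p q : Submodule R M} (hdisj : Disjoint a n) (hpa : p ≤ a) (hqn : q ≤ n)
    {h u H X : M} (hh : h ∈ a) (hu : u ∈ n) (hH : H ∈ a) (hX : X ∈ n) :
    H + X ∈ p ⊔ q ⊔ span R {h + u} ↔ ∃ s : R, H - s • h ∈ p ∧ X - s • u ∈ q := by
  constructor
  · intro hmem
    obtain ⟨y, hy, z, hz, hsum⟩ := mem_sup.mp hmem
    obtain ⟨P, hP, Q, hQ, rfl⟩ := mem_sup.mp hy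
    obtain ⟨s, rfl⟩ := mem_span_singleton.mp hz
    -- `H - P - s • h ∈ a` and `Q + s • u - X ∈ n` coincide, hence vanish
    have hcomp : H - P - s • h = Q + s • u - X := by
      rw [← sub_eq_zero, ← add_sub_cancel_left H X, ← hsum]; module
    have hzero := disjoint_def.mp hdisj _ (sub_mem (sub_mem hH (hpa hP)) (smul_mem _ _ hh))
      (hcomp ▸ sub_mem (add_mem (hqn hQ) (smul_mem _ _ hu)) hX)
    refine ⟨s, ?_, ?_⟩
    · rwa [show H - s • h = P + (H - P - s • h) by abel, hzero, add_zero]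
    · rwa [show X - s • u = Q - (Q + s • u - X) by abel, ← hcomp, hzero, sub_zero]
  · rintro ⟨s, hHp, hXq⟩
    rw [show H + X = (H - s • h) + (X - s • u) + s • (h + u) by module]
    exact add_mem (add_mem (mem_sup_left (mem_sup_left hHp)) (mem_sup_left (mem_sup_right hXq)))
      (mem_sup_right (smul_mem _ _ (mem_span_singleton_self _)))

theorem exists_eq_mul_and_eq_mul_iff {K : Type*} [Field K] {x y c t : K} (hc : c = 0 → x = 0) :
    (∃ s, x = s * c ∧ y = s * (t * c)) ↔ y = t * x := by
  constructor
  · rintro ⟨s, rfl, rfl⟩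
    ring
  · rintro rfl
    by_cases hc0 : c = 0
    · exact ⟨0, by simp [hc hc0, hc0]⟩
    · exact ⟨x / c, by field_simp, by field_simp⟩

section CartanInner

variable {L : Type*} [LieRing L] [LieAlgebra ℝ L] {θ : L →ₗ⁅ℝ⁆ L}

variable (θ) in
noncomputable def cipForm : LinearMap.BilinForm ℝ L :=
  -(killingForm ℝ L).compl₂ (θ : L →ₗ[ℝ] L)

@[simp] theorem cipForm_apply (X Y : L) : cipForm θ X Y = cip L θ X Y := rfl

variable (θ) in
/-- `n ⊓ cipOrth θ v` is the paper's `n ⊖ v`. -/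
noncomputable def cipOrth (v : Submodule ℝ L) : Submodule ℝ L :=
  ⨅ V : v, LinearMap.ker ((killingForm ℝ L).flip (θ (V : L)))

theorem mem_cipOrth_iff {v : Submodule ℝ L} {X : L} :
    X ∈ cipOrth θ v ↔ ∀ V ∈ v, cip L θ X V = 0 := by
  simp [cipOrth, cip]

theorem mem_cipOrth_span_iff {s : Set L} {X : L} :
    X ∈ cipOrth θ (Submodule.span ℝ s) ↔ ∀ V ∈ s, cip L θ X V = 0 := by
  rw [mem_cipOrth_iff]
  exact Submodule.span_le (p := LinearMap.ker (cipForm θ X))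

theorem sub_smul_mem_cipOrth_span_pair_iff {ξ η : L} (hnorm : cip L θ ξ ξ = 1)
    (horth : cip L θ ξ η = 0) {X : L} {k : ℝ} :
    X - k • ξ ∈ cipOrth θ (Submodule.span ℝ {ξ, η}) ↔ cip L θ X ξ = k ∧ cip L θ X η = 0 := by
  simp only [mem_cipOrth_span_iff, Set.forall_mem_insert, Set.mem_singleton_iff, forall_eq,
    ← cipForm_apply, map_sub, map_smul, LinearMap.sub_apply, LinearMap.smul_apply, smul_eq_mul]
  simp only [cipForm_apply, hnorm, horth, sub_eq_zero, mul_one, mul_zero, sub_zero]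

theorem disjoint_of_forall_cip_eq_zero (hpos : ∀ X : L, X ≠ 0 → 0 < cip L θ X X)
    {a n : Submodule ℝ L} (horth : ∀ H ∈ a, ∀ X ∈ n, cip L θ H X = 0) : Disjoint a n :=
  Submodule.disjoint_def.mpr fun x hxa hxn => by
    by_contra hx
    exact (hpos x hx).ne' (horth x hxa x hxn)

theorem forall_apply_eq_zero_of_apply_dual_eq_zero (hpos : ∀ X : L, X ≠ 0 → 0 < cip L θ X X)
    {a : Submodule ℝ L} {αl : L →ₗ[ℝ] ℝ} {Hα : L} (hHα : Hα ∈ a)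
    (hdual : ∀ H ∈ a, cip L θ Hα H = αl H) (h : αl Hα = 0) : ∀ H ∈ a, αl H = 0 := by
  have hHα0 : Hα = 0 := by
    by_contra hne
    exact (hpos Hα hne).ne' ((hdual Hα hHα).trans h)
  intro H hH
  simp [← hdual H hH, hHα0, cip]

end CartanInner

section AdExp

variable {L : Type*} [LieRing L] [LieAlgebra ℝ L] {ξ : L} {t : ℝ}

theorem smul_ad_apply_of_lie_eq_smul {H : L} {c : ℝ} (hH : ⁅H, ξ⁆ = c • ξ) :
    ((-t) • LieAlgebra.ad ℝ L ξ) H = (t * c) • ξ := by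
  rw [LinearMap.smul_apply, LieAlgebra.ad_apply, ← lie_skew, hH]
  module

theorem IsExpOf.apply_of_lie_eq_smul [TopologicalSpace L] [T2Space L] {E : Module.End ℝ L}
    (hE : IsExpOf L ((-t) • LieAlgebra.ad ℝ L ξ) E) {H : L} {c : ℝ} (hH : ⁅H, ξ⁆ = c • ξ) :
    E H = H + (t * c) • ξ := by
  have hfH := smul_ad_apply_of_lie_eq_smul (t := t) hH
  rw [hE.apply_eq_add_of_apply_apply_eq_zero (by rw [hfH]; simp), hfH]

variable {θ : L →ₗ⁅ℝ⁆ L} {a n v : Submodule ℝ L} {αl : L →ₗ[ℝ] ℝ}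

theorem inf_ker_le_comap_ad (hξroot : ∀ H ∈ a, ⁅H, ξ⁆ = αl H • ξ) :
    a ⊓ LinearMap.ker αl ≤ (a ⊓ LinearMap.ker αl).comap ((-t) • LieAlgebra.ad ℝ L ξ) :=
  fun H ⟨hH, hαH⟩ => by
    rw [Submodule.mem_comap, smul_ad_apply_of_lie_eq_smul (hξroot H hH),
      LinearMap.mem_ker.mp hαH, mul_zero, zero_smul]
    exact zero_mem _

theorem inf_cipOrth_le_comap_ad (hξn : ξ ∈ n) (hnn : ∀ X ∈ n, ∀ Y ∈ n, ⁅X, Y⁆ ∈ n)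
    (hsimple : ∀ X ∈ n, ∀ Y ∈ n, ∀ V ∈ v, cip L θ ⁅X, Y⁆ V = 0) (c : ℝ) :
    n ⊓ cipOrth θ v ≤ (n ⊓ cipOrth θ v).comap (c • LieAlgebra.ad ℝ L ξ) := by
  rintro X ⟨hX, -⟩
  refine ⟨n.smul_mem c (hnn ξ hξn X hX), mem_cipOrth_iff.mpr fun V hV => ?_⟩
  rw [LinearMap.smul_apply, LieAlgebra.ad_apply, ← cipForm_apply, map_smul, LinearMap.smul_apply,
    cipForm_apply, hsimple ξ hξn X hX V hV, smul_zero]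

theorem IsExpOf.map_sup_inf_cipOrth [TopologicalSpace L] [FiniteDimensional ℝ L]
    [IsTopologicalAddGroup L] [ContinuousSMul ℝ L] [T2Space L] {E : Module.End ℝ L}
    (hE : IsExpOf L ((-t) • LieAlgebra.ad ℝ L ξ) E) {Hα : L} (hHα : Hα ∈ a)
    (hdeg : αl Hα = 0 → ∀ H ∈ a, αl H = 0) (hξroot : ∀ H ∈ a, ⁅H, ξ⁆ = αl H • ξ) (hξn : ξ ∈ n)
    (hnn : ∀ X ∈ n, ∀ Y ∈ n, ⁅X, Y⁆ ∈ n)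
    (hsimple : ∀ X ∈ n, ∀ Y ∈ n, ∀ V ∈ v, cip L θ ⁅X, Y⁆ V = 0) :
    (a ⊔ n ⊓ cipOrth θ v).map E =
      a ⊓ LinearMap.ker αl ⊔ n ⊓ cipOrth θ v ⊔ Submodule.span ℝ {Hα + (t * αl Hα) • ξ} := by
  conv_lhs => rw [← Submodule.inf_ker_sup_span_singleton_eq hHα hdeg]
  rw [Submodule.map_sup, Submodule.map_sup, hE.map_eq_of_le_comap (inf_ker_le_comap_ad hξroot),
    hE.map_eq_of_le_comap (inf_cipOrth_le_comap_ad hξn hnn hsimple _), Submodule.map_span,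
    Set.image_singleton, hE.apply_of_lie_eq_smul (hξroot Hα hHα), sup_right_comm]

theorem add_mem_inf_ker_sup_inf_cipOrth_sup_span_iff (hdisj : Disjoint a n) {Hα η : L}
    (hHα : Hα ∈ a) (hξn : ξ ∈ n) (hdeg : αl Hα = 0 → ∀ H ∈ a, αl H = 0)
    (hnorm : cip L θ ξ ξ = 1) (horth : cip L θ ξ η = 0) {H X : L} (hH : H ∈ a) (hX : X ∈ n) :
    H + X ∈ a ⊓ LinearMap.ker αl ⊔ n ⊓ cipOrth θ (Submodule.span ℝ {ξ, η}) ⊔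
        Submodule.span ℝ {Hα + (t * αl Hα) • ξ} ↔
      cip L θ X ξ = t * αl H ∧ cip L θ X η = 0 := by
  rw [Submodule.add_mem_sup_sup_span_singleton_iff hdisj inf_le_left inf_le_left hHα
    (n.smul_mem _ hξn) hH hX]
  simp only [Submodule.mem_inf, smul_smul, a.sub_mem_iff_left (a.smul_mem _ hHα), hH,
    n.sub_mem_iff_left (n.smul_mem _ hξn), hX, true_and, LinearMap.mem_ker, map_sub, map_smul,
    smul_eq_mul, sub_eq_zero, sub_smul_mem_cipOrth_span_pair_iff hnorm horth, ← and_assoc,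
    exists_and_right, exists_eq_mul_and_eq_mul_iff fun h => hdeg h H hH]

end AdExp

theorem conjugated_s_v_general
    (L : Type*) [LieRing L] [LieAlgebra ℝ L] [FiniteDimensional ℝ L]
    [TopologicalSpace L] [IsTopologicalAddGroup L] [ContinuousSMul ℝ L] [T2Space L]
    (θ : L →ₗ⁅ℝ⁆ L)
    (hpos : ∀ X : L, X ≠ 0 → 0 < cip L θ X X)
    (a n : Submodule ℝ L)
    (hnn : ∀ X ∈ n, ∀ Y ∈ n, ⁅X, Y⁆ ∈ n)
    (horthan : ∀ H ∈ a, ∀ X ∈ n, cip L θ H X = 0)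
    (hsymm : ∀ X Y : L, cip L θ X Y = cip L θ Y X)
    -- the simple root `α` and its dual `H_α`
    (αl : L →ₗ[ℝ] ℝ) (Hα : L) (hHα : Hα ∈ a)
    (hdual : ∀ H ∈ a, cip L θ Hα H = αl H)
    -- the abelian plane `v ⊆ g_α` with orthogonal basis `{ξ, η}`, `ξ` a unit vector
    (v : Submodule ℝ L) (hvn : v ≤ n)
    (hvroot : ∀ V ∈ v, ∀ H ∈ a, ⁅H, V⁆ = αl H • V)
    -- since `α` is simple, `[n,n]` is orthogonal to `g_α ⊇ v`
    (hsimple : ∀ X ∈ n, ∀ Y ∈ n, ∀ V ∈ v, cip L θ ⁅X, Y⁆ V = 0)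
    (ξ η : L) (hξv : ξ ∈ v) (hηv : η ∈ v)
    (hnorm : cip L θ ξ ξ = 1) (horth : cip L θ ξ η = 0)
    (hspanv : v = Submodule.span ℝ {ξ, η})
    -- projections defining the `AN`-metric
    (Pa Pn : L →ₗ[ℝ] L)
    (hPaa : ∀ x ∈ a, Pa x = x ∧ Pn x = 0)
    (hPnn : ∀ x ∈ n, Pn x = x ∧ Pa x = 0)
    (t : ℝ)
    -- `Ad(g⁻¹) = e^{-t ad ξ}`
    (Einv : Module.End ℝ L)
    (hEinv : IsExpOf L ((-t) • LieAlgebra.ad ℝ L ξ) Einv) :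
    Submodule.map Einv
        (a ⊔ (n ⊓ ⨅ V : v, LinearMap.ker ((killingForm ℝ L).flip (θ (V : L))))) =
      (a ⊓ LinearMap.ker αl) ⊔
        (n ⊓ ⨅ V : v, LinearMap.ker ((killingForm ℝ L).flip (θ (V : L)))) ⊔
        Submodule.span ℝ {Hα + (t * cip L θ Hα Hα) • ξ} ∧
    (∀ x ∈ a ⊔ n,
      (x ∈ Submodule.map Einv
          (a ⊔ (n ⊓ ⨅ V : v, LinearMap.ker ((killingForm ℝ L).flip (θ (V : L))))) ↔
        (cipAN L θ Pa Pn x η = 0 ∧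
          cipAN L θ Pa Pn x (t • Hα - (2 : ℝ) • ξ) = 0))) := by
  have hξn : ξ ∈ n := hvn hξv
  have hdeg := forall_apply_eq_zero_of_apply_dual_eq_zero hpos hHα hdual
  have hmap := hEinv.map_sup_inf_cipOrth hHα hdeg (hvroot ξ hξv) hξn hnn hsimple
  rw [← hdual Hα hHα] at hmap
  refine ⟨hmap, fun x hx => ?_⟩
  obtain ⟨H, hH, X, hX, rfl⟩ := Submodule.mem_sup.mp hx
  have hη : cipAN L θ Pa Pn (H + X) η = cip L θ X η / 2 := by
    simp [cipAN, hPaa H hH, hPnn X hX, hPnn η (hvn hηv), cip]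
    ring
  have hξ : cipAN L θ Pa Pn (H + X) (t • Hα - (2 : ℝ) • ξ) = t * αl H - cip L θ X ξ := by
    rw [← hdual H hH, hsymm Hα H]
    simp [cipAN, hPaa H hH, hPnn X hX, hPaa Hα hHα, hPnn ξ hξn, cip]
  rw [← cipOrth, hmap, hdual Hα hHα, hspanv, add_mem_inf_ker_sup_inf_cipOrth_sup_span_iff
    (disjoint_of_forall_cip_eq_zero hpos horthan) hHα hξn hdeg hnorm horth hH hX, hη, hξ]
  constructor <;> rintro ⟨h₁, h₂⟩ <;> constructor <;> linarith

/-- Let `v ⊆ g_α` be an abelian plane with orthogonal basis `{ξ,η}`, `ξ` a unit vector,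
`t ∈ ℝ` and `g = Exp(tξ)`.  Then `Ad(g⁻¹)(a ⊕ (n ⊖ v))` equals
`ker α ⊕ (n ⊖ v) ⊕ ℝ(H_α + t|α|²ξ)`; in particular its orthogonal complement in `a ⊕ n`
with respect to `⟨·,·⟩_{AN}` is spanned by `η` and `tH_α - 2ξ`. -/
theorem conjugated_s_v
    (L : Type*) [LieRing L] [LieAlgebra ℝ L] [FiniteDimensional ℝ L]
    [LieAlgebra.IsSemisimple ℝ L]
    [TopologicalSpace L] [IsTopologicalAddGroup L] [ContinuousSMul ℝ L] [T2Space L]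
    (θ : L →ₗ⁅ℝ⁆ L) (hθ : Function.Involutive θ)
    (hpos : ∀ X : L, X ≠ 0 → 0 < cip L θ X X)
    (a n : Submodule ℝ L)
    (hap : ∀ H ∈ a, θ H = -H)
    (habelian : ∀ H ∈ a, ∀ H' ∈ a, ⁅H, H'⁆ = 0)
    (hnn : ∀ X ∈ n, ∀ Y ∈ n, ⁅X, Y⁆ ∈ n)
    (han : ∀ H ∈ a, ∀ X ∈ n, ⁅H, X⁆ ∈ n)
    (horthan : ∀ H ∈ a, ∀ X ∈ n, cip L θ H X = 0)
    (hBnn : ∀ X ∈ n, ∀ Y ∈ n, killingForm ℝ L X Y = 0)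
    (hsymm : ∀ X Y : L, cip L θ X Y = cip L θ Y X)
    (hadj : ∀ X Y Z : L, cip L θ ⁅X, Y⁆ Z = -(cip L θ Y ⁅θ X, Z⁆))
    -- the simple root `α` and its dual `H_α`
    (αl : L →ₗ[ℝ] ℝ) (Hα : L) (hHα : Hα ∈ a)
    (hdual : ∀ H ∈ a, cip L θ Hα H = αl H)
    -- the abelian plane `v ⊆ g_α` with orthogonal basis `{ξ, η}`, `ξ` a unit vector
    (v : Submodule ℝ L) (hvn : v ≤ n)
    (hvroot : ∀ V ∈ v, ∀ H ∈ a, ⁅H, V⁆ = αl H • V)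
    (hvab : ∀ V ∈ v, ∀ W ∈ v, ⁅V, W⁆ = 0)
    -- since `α` is simple, `[n,n]` is orthogonal to `g_α ⊇ v`
    (hsimple : ∀ X ∈ n, ∀ Y ∈ n, ∀ V ∈ v, cip L θ ⁅X, Y⁆ V = 0)
    (ξ η : L) (hξv : ξ ∈ v) (hηv : η ∈ v) (hη0 : η ≠ 0)
    (hnorm : cip L θ ξ ξ = 1) (horth : cip L θ ξ η = 0)
    (hspanv : v = Submodule.span ℝ {ξ, η})
    -- projections defining the `AN`-metric
    (Pa Pn : L →ₗ[ℝ] L)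
    (hPaa : ∀ x ∈ a, Pa x = x ∧ Pn x = 0)
    (hPnn : ∀ x ∈ n, Pn x = x ∧ Pa x = 0)
    (hPmem : ∀ x : L, Pa x ∈ a ∧ Pn x ∈ n)
    (t : ℝ)
    -- `Ad(g⁻¹) = e^{-t ad ξ}`
    (Einv : Module.End ℝ L)
    (hEinv : IsExpOf L ((-t) • LieAlgebra.ad ℝ L ξ) Einv) :
    Submodule.map Einv
        (a ⊔ (n ⊓ ⨅ V : v, LinearMap.ker ((killingForm ℝ L).flip (θ (V : L))))) =
      (a ⊓ LinearMap.ker αl) ⊔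
        (n ⊓ ⨅ V : v, LinearMap.ker ((killingForm ℝ L).flip (θ (V : L)))) ⊔
        Submodule.span ℝ {Hα + (t * cip L θ Hα Hα) • ξ} ∧
    (∀ x ∈ a ⊔ n,
      (x ∈ Submodule.map Einv
          (a ⊔ (n ⊓ ⨅ V : v, LinearMap.ker ((killingForm ℝ L).flip (θ (V : L))))) ↔
        (cipAN L θ Pa Pn x η = 0 ∧
          cipAN L θ Pa Pn x (t • Hα - (2 : ℝ) • ξ) = 0))) :=
  conjugated_s_v_general L θ hpos a n hnn horthan hsymm αl Hα hHα hdual v hvn hvroot hsimple ξ η hξv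
    hηv hnorm horth hspanv Pa Pn hPaa hPnn t Einv hEinv
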